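/- arXiv:2310.17111 — 3 statements merged into one kernel-verified Lean document; each statement's English description precedes it below -/
import Mathlib

section
/- Let p₂ and q be real numbers with 0 < p₂ < 1 and 0 < q < 1, and define f(x) = (1 - (1-p₂)^x)·(1-q)^(x-1) for real x ≥ 1. If (1-q) / ((1-q)(1-p₂))^((1-p₂)^2) > 1, then there exists a real number x₀ > 2 such that f is strictly monotone increasing on the interval [1, x₀] and strictly monotone decreasing on the interval [x₀, ∞). -/
/-!
With `a = 1 - p₂` and `b = 1 - q`, the derivative of `(1 - a ^ x) * b ^ (x - 1)` is
`b ^ (x - 1) * (log b - a ^ x * log (b * a))`. The second factor is strictly decreasing, since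
`a ^ x` decreases and `log (b * a) < 0`; it tends to `log b < 0`, and the hypothesis says exactly
that it is positive at `x = 2`. Its unique zero `x₀ > 2` is the maximum of the survival probability.
-/

open Real Set Filter

theorem StrictAnti.exists_mem_Ioo_eq_zero {g : ℝ → ℝ} (hg : StrictAnti g) (hc : Continuous g)
    {a b : ℝ} (ha : 0 < g a) (hb : g b < 0) : ∃ x₀ ∈ Ioo a b, g x₀ = 0 := by
  have hab : a ≤ b := by
    by_contra! h
    linarith [hg h]
  exact intermediate_value_Ioo' hab hc.continuousOn ⟨hb, ha⟩

theorem strictMonoOn_Iic_strictAntiOn_Ici_of_hasDerivAt {F F' : ℝ → ℝ} {x₀ : ℝ}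
    (hF : ∀ x, HasDerivAt F (F' x) x) (hpos : ∀ x < x₀, 0 < F' x) (hneg : ∀ x, x₀ < x → F' x < 0) :
    StrictMonoOn F (Iic x₀) ∧ StrictAntiOn F (Ici x₀) := by
  have hcont : Continuous F := continuous_iff_continuousAt.2 fun x => (hF x).continuousAt
  constructor
  · refine strictMonoOn_of_deriv_pos (convex_Iic x₀) hcont.continuousOn fun x hx => ?_
    rw [interior_Iic] at hx
    exact (hF x).deriv ▸ hpos x hx
  · refine strictAntiOn_of_deriv_neg (convex_Ici x₀) hcont.continuousOn fun x hx => ?_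
    rw [interior_Ici] at hx
    exact (hF x).deriv ▸ hneg x hx

noncomputable def survival (a b x : ℝ) : ℝ := (1 - a ^ x) * b ^ (x - 1)

noncomputable def survivalRate (a b x : ℝ) : ℝ := log b - a ^ x * log (b * a)

theorem hasDerivAt_survival {a b : ℝ} (ha : 0 < a) (hb : 0 < b) (x : ℝ) :
    HasDerivAt (survival a b) (b ^ (x - 1) * survivalRate a b x) x := by
  have hax := (hasStrictDerivAt_const_rpow ha x).hasDerivAt
  have hbx := ((hasDerivAt_id x).sub_const 1).const_rpow hb
  refine ((hax.const_sub 1).mul hbx).congr_deriv ?_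
  simp only [survivalRate, id, log_mul hb.ne' ha.ne']
  ring

theorem strictAnti_survivalRate {a b : ℝ} (ha₀ : 0 < a) (ha₁ : a < 1) (hb₀ : 0 < b) (hb₁ : b < 1) :
    StrictAnti (survivalRate a b) := by
  have hlog : log (b * a) < 0 := log_neg (mul_pos hb₀ ha₀) (by nlinarith)
  intro x y hxy
  have := rpow_lt_rpow_of_exponent_gt ha₀ ha₁ hxy
  simp only [survivalRate]
  nlinarith

theorem continuous_survivalRate {a : ℝ} (ha : 0 < a) (b : ℝ) : Continuous (survivalRate a b) :=
  continuous_const.sub ((continuous_const_rpow ha.ne').mul continuous_const)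

theorem tendsto_survivalRate_atTop {a : ℝ} (ha₀ : 0 < a) (ha₁ : a < 1) (b : ℝ) :
    Tendsto (survivalRate a b) atTop (nhds (log b)) := by
  have := ((tendsto_rpow_atTop_of_base_lt_one a (by linarith) ha₁).mul_const (log (b * a))).const_sub
    (log b)
  rw [zero_mul, sub_zero] at this
  exact this

theorem survivalRate_two_pos {a b : ℝ} (ha : 0 < a) (hb : 0 < b) (h : b / (b * a) ^ (a ^ 2) > 1) :
    0 < survivalRate a b 2 := by
  have hba := mul_pos hb ha
  have hlt : (b * a) ^ (a ^ 2) < b := by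
    rwa [gt_iff_lt, one_lt_div (rpow_pos_of_pos hba _)] at h
  have := log_lt_log (rpow_pos_of_pos hba _) hlt
  rw [log_rpow hba] at this
  rw [survivalRate, rpow_two]
  linarith

/-- Proposition 1: the survival probability
`f x = (1 - (1-p₂)^x) * (1-q)^(x-1)` (real exponents) of an armed civilian who
fights back, as a function of the number `x ≥ 1` of armed civilians who fight,
first strictly increases and then strictly decreases, provided
`(1-q) / ((1-q)(1-p₂))^((1-p₂)^2) > 1`. -/
theorem stmt_0 (p₂ q : ℝ) (hp₂ : 0 < p₂) (hp₂' : p₂ < 1) (hq : 0 < q) (hq' : q < 1)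
    (f : ℝ → ℝ)
    (hf : ∀ x : ℝ, 1 ≤ x → f x = (1 - (1 - p₂) ^ x) * (1 - q) ^ (x - 1))
    (hcond : (1 - q) / ((1 - q) * (1 - p₂)) ^ ((1 - p₂) ^ 2) > 1) :
    ∃ x₀ : ℝ, x₀ > 2 ∧ StrictMonoOn f (Set.Icc 1 x₀) ∧ StrictAntiOn f (Set.Ici x₀) := by
  have ha₀ : 0 < 1 - p₂ := by linarith
  have ha₁ : 1 - p₂ < 1 := by linarith
  have hb₀ : 0 < 1 - q := by linarith
  have hb₁ : 1 - q < 1 := by linarith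
  have hrate := strictAnti_survivalRate ha₀ ha₁ hb₀ hb₁
  obtain ⟨X, hX⟩ : ∃ X, survivalRate (1 - p₂) (1 - q) X < 0 :=
    ((tendsto_survivalRate_atTop ha₀ ha₁ _).eventually (gt_mem_nhds (log_neg hb₀ hb₁))).exists
  obtain ⟨x₀, ⟨hx₀, -⟩, hzero⟩ := hrate.exists_mem_Ioo_eq_zero (continuous_survivalRate ha₀ _)
    (survivalRate_two_pos ha₀ hb₀ hcond) hX
  obtain ⟨hmono, hanti⟩ := strictMonoOn_Iic_strictAntiOn_Ici_of_hasDerivAt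
    (hasDerivAt_survival ha₀ hb₀)
    (fun x hx => mul_pos (rpow_pos_of_pos hb₀ _) (hzero ▸ hrate hx))
    (fun x hx => mul_neg_of_pos_of_neg (rpow_pos_of_pos hb₀ _) (hzero ▸ hrate hx))
  have hfeq : EqOn (survival (1 - p₂) (1 - q)) f (Ici 1) := fun x hx => (hf x hx).symm
  exact ⟨x₀, hx₀, (hmono.mono Icc_subset_Iic_self).congr (hfeq.mono Icc_subset_Ici_self),
    hanti.congr (hfeq.mono (Ici_subset_Ici.2 (by linarith)))⟩
end

section
/- Let p₂ and q be real numbers with 0 < p₂ < 1 and 0 < q < 1, and define f(x) = (1 - (1-p₂)^x)·(1-q)^(x-1) for real x. Then for every real x, the derivative satisfies f'(x) > 0 if and only if (1-q) > ((1-q)(1-p₂))^((1-p₂)^x). -/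
/-!
With `a = 1 - p₂` and `b = 1 - q`, the derivative factors as
`f' x = b ^ (x - 1) * (log b - a ^ x * log (b * a))`; the first factor is positive, and the
second is positive exactly when `(b * a) ^ (a ^ x) < b`, by taking logarithms.
-/

open Real

theorem hasDerivAt_one_sub_rpow_mul_rpow_sub_one {a b : ℝ} (ha : 0 < a) (hb : 0 < b) (x : ℝ) :
    HasDerivAt (fun x : ℝ => (1 - a ^ x) * b ^ (x - 1))
      (b ^ (x - 1) * (log b - a ^ x * log (b * a))) x := by
  have hfirst := ((hasDerivAt_id x).const_rpow ha).const_sub 1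
  have hsecond := ((hasDerivAt_id x).sub_const 1).const_rpow hb
  refine (hfirst.mul hsecond).congr_deriv ?_
  simp only [id, log_mul hb.ne' ha.ne']
  ring

theorem rpow_lt_iff_mul_log_lt {b c : ℝ} (hb : 0 < b) (hc : 0 < c) (t : ℝ) :
    c ^ t < b ↔ t * log c < log b := by
  rw [← log_lt_log_iff (rpow_pos_of_pos hc t) hb, log_rpow hc]

theorem stmt_2_general (p₂ q : ℝ) (hp₂' : p₂ < 1) (hq' : q < 1)
    (f : ℝ → ℝ)
    (hf : ∀ x : ℝ, f x = (1 - (1 - p₂) ^ x) * (1 - q) ^ (x - 1)) :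
    ∀ x : ℝ, 0 < deriv f x ↔ (1 - q) > ((1 - q) * (1 - p₂)) ^ ((1 - p₂) ^ x) := by
  intro x
  have ha : 0 < 1 - p₂ := sub_pos.2 hp₂'
  have hb : 0 < 1 - q := sub_pos.2 hq'
  rw [funext hf, (hasDerivAt_one_sub_rpow_mul_rpow_sub_one ha hb x).deriv,
    mul_pos_iff_of_pos_left (rpow_pos_of_pos hb _), sub_pos, gt_iff_lt,
    rpow_lt_iff_mul_log_lt hb (mul_pos hb ha)]

/-- Sign characterization of the derivative from the proof of Proposition 1:
for `f x = (1 - (1-p₂)^x) * (1-q)^(x-1)`, one has `f'(x) > 0` iff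
`(1-q) > ((1-q)(1-p₂))^((1-p₂)^x)`. -/
theorem stmt_2 (p₂ q : ℝ) (hp₂ : 0 < p₂) (hp₂' : p₂ < 1) (hq : 0 < q) (hq' : q < 1)
    (f : ℝ → ℝ)
    (hf : ∀ x : ℝ, f x = (1 - (1 - p₂) ^ x) * (1 - q) ^ (x - 1)) :
    ∀ x : ℝ, 0 < deriv f x ↔ (1 - q) > ((1 - q) * (1 - p₂)) ^ ((1 - p₂) ^ x) :=
  stmt_2_general p₂ q hp₂' hq' f hf
end

section
/- Let p₂ and q be real numbers with 0 < p₂ < 1 and 0 < q < 1, and for positive integers K define g(K) = (1 - (1-p₂)^K)·(1-q)^(K-1). If (1-q) / ((1-q)(1-p₂))^((1-p₂)^2) > 1, then there exists a real number x₀ > 2 such that for every positive integer K: if K + 1 ≤ x₀ then g(K+1) > g(K), and if K ≥ x₀ then g(K+1) < g(K); that is, g first increases and then decreases. -/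
/-!
With `a = 1 - p₂` and `b = 1 - q`, `g (K + 1) - g K = b ^ (K - 1) * φ K` where
`φ K = b - 1 + a ^ K * (1 - a * b)` decreases strictly to `b - 1 < 0`. So `g` rises while `φ` is
positive and falls afterwards, and it remains to see that `φ 1 = (1 - a) * (b * (1 + a) - 1)` is
positive. The hypothesis says `a ^ (a ^ 2) < b ^ (1 - a ^ 2)`, and the weighted GM–HM inequality
for the values `a`, `1 + a` with weights `a ^ 2`, `1 - a ^ 2` (whose harmonic mean is exactly `1`)
gives `1 ≤ a ^ (a ^ 2) * (1 + a) ^ (1 - a ^ 2)`; together, `1 < (b * (1 + a)) ^ (1 - a ^ 2)`.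
-/

open Filter Topology

theorem StrictAnti.exists_pos_iff_lt_and_neg_of_lt {α : Type*} [LinearOrder α] [Zero α]
    {φ : ℕ → α} (hφ : StrictAnti φ) (h : ∃ n, φ n ≤ 0) :
    ∃ n₀, (∀ k, 0 < φ k ↔ k < n₀) ∧ ∀ k, n₀ < k → φ k < 0 := by
  classical
  refine ⟨Nat.find h, fun k => ⟨fun hk => ?_, fun hk => not_le.1 (Nat.find_min h hk)⟩,
    fun k hk => (hφ hk).trans_le (Nat.find_spec h)⟩
  by_contra hle
  exact (hφ.antitone (not_lt.1 hle)).trans (Nat.find_spec h) |>.not_gt hk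

namespace Real

theorem one_le_rpow_sq_mul_one_add_rpow {a : ℝ} (ha : 0 < a) (ha1 : a ≤ 1) :
    1 ≤ a ^ (a ^ 2) * (1 + a) ^ (1 - a ^ 2) := by
  have hgm := geom_mean_le_arith_mean2_weighted (p₁ := a⁻¹) (p₂ := (1 + a)⁻¹)
    (sq_nonneg a) (by nlinarith) (by positivity) (by positivity) (add_sub_cancel _ 1)
  have hhm : a ^ 2 * a⁻¹ + (1 - a ^ 2) * (1 + a)⁻¹ = 1 := by field_simp; ring
  rw [inv_rpow ha.le, inv_rpow (by positivity), ← mul_inv, hhm] at hgm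
  exact (inv_le_one₀ (by positivity)).1 hgm

theorem one_lt_mul_one_add_of_one_lt_div_rpow {a b : ℝ} (ha : 0 < a) (ha1 : a < 1) (hb : 0 < b)
    (h : 1 < b / (b * a) ^ (a ^ 2)) : 1 < b * (1 + a) := by
  have hlt : a ^ (a ^ 2) < b ^ (1 - a ^ 2) := by
    have hsplit : b ^ (a ^ 2) * b ^ (1 - a ^ 2) = b := by
      rw [← rpow_add hb, add_sub_cancel, rpow_one]
    rw [one_lt_div (by positivity), mul_rpow hb.le ha.le] at h
    exact lt_of_mul_lt_mul_left (h.trans_eq hsplit.symm) (by positivity)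
  have hC : 0 < (1 + a) ^ (1 - a ^ 2) := by positivity
  by_contra hle
  have hpow := rpow_le_one (by positivity) (not_lt.1 hle) (z := 1 - a ^ 2) (by nlinarith)
  rw [mul_rpow hb.le (by positivity)] at hpow
  linarith [one_le_rpow_sq_mul_one_add_rpow ha ha1.le, mul_lt_mul_of_pos_right hlt hC]

end Real

section IncrementFactor

variable {a b : ℝ}

def incrementFactor (a b : ℝ) (k : ℕ) : ℝ := b - 1 + a ^ k * (1 - a * b)

theorem incrementFactor_strictAnti (ha : 0 < a) (ha1 : a < 1) (hab : a * b < 1) :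
    StrictAnti (incrementFactor a b) := fun _ _ hkl =>
  add_lt_add_right (mul_lt_mul_of_pos_right (pow_lt_pow_right_of_lt_one₀ ha ha1 hkl)
    (sub_pos.2 hab)) _

theorem exists_incrementFactor_nonpos (ha : 0 ≤ a) (ha1 : a < 1) (hb : b < 1) :
    ∃ n, incrementFactor a b n ≤ 0 := by
  have hlim : Tendsto (incrementFactor a b) atTop (𝓝 (b - 1 + 0 * (1 - a * b))) :=
    ((tendsto_pow_atTop_nhds_zero_of_lt_one ha ha1).mul_const _).const_add _
  rw [zero_mul, add_zero] at hlim
  exact (hlim.eventually (ge_mem_nhds (by linarith))).exists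

theorem incrementFactor_one_pos (ha1 : a < 1) (h : 1 < b * (1 + a)) :
    0 < incrementFactor a b 1 := by
  have hφ : incrementFactor a b 1 = (1 - a) * (b * (1 + a) - 1) := by
    rw [incrementFactor]; ring
  rw [hφ]
  exact mul_pos (sub_pos.2 ha1) (sub_pos.2 h)

theorem sub_eq_pow_mul_incrementFactor (k : ℕ) :
    (1 - a ^ (k + 2)) * b ^ (k + 1) - (1 - a ^ (k + 1)) * b ^ k
      = b ^ k * incrementFactor a b (k + 1) := by
  rw [incrementFactor]; ring

end IncrementFactor

/-- Discrete form of Proposition 1: the survival probability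
`g K = (1 - (1-p₂)^K) * (1-q)^(K-1)` of an armed civilian who fights back,
as a function of the number `K ≥ 1` of armed civilians who fight, first
increases and then decreases, provided `(1-q)/((1-q)(1-p₂))^((1-p₂)^2) > 1`. -/
theorem stmt_5 (p₂ q : ℝ) (hp₂ : 0 < p₂) (hp₂' : p₂ < 1) (hq : 0 < q) (hq' : q < 1)
    (g : ℕ → ℝ)
    (hg : ∀ K : ℕ, 1 ≤ K → g K = (1 - (1 - p₂) ^ (K : ℝ)) * (1 - q) ^ ((K : ℝ) - 1))
    (hcond : (1 - q) / ((1 - q) * (1 - p₂)) ^ ((1 - p₂) ^ 2) > 1) :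
    ∃ x₀ : ℝ, x₀ > 2 ∧
      ∀ K : ℕ, 1 ≤ K →
        (((K : ℝ) + 1 ≤ x₀ → g K < g (K + 1)) ∧ ((x₀ ≤ (K : ℝ)) → g (K + 1) < g K)) := by
  have ha : 0 < 1 - p₂ := sub_pos.2 hp₂'
  have ha1 : 1 - p₂ < 1 := by linarith
  have hb : 0 < 1 - q := sub_pos.2 hq'
  have hab : (1 - p₂) * (1 - q) < 1 := mul_lt_one_of_nonneg_of_lt_one_left ha.le ha1 (by linarith)
  have hφ1 := incrementFactor_one_pos ha1
    (Real.one_lt_mul_one_add_of_one_lt_div_rpow ha ha1 hb hcond)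
  obtain ⟨n₀, hpos, hneg⟩ :=
    (incrementFactor_strictAnti ha ha1 hab).exists_pos_iff_lt_and_neg_of_lt
      (exists_incrementFactor_nonpos ha.le ha1 (by linarith))
  have hn₀ : (2 : ℝ) ≤ n₀ := by exact_mod_cast (hpos 1).1 hφ1
  have hgap : ∀ j : ℕ,
      g (j + 1 + 1) - g (j + 1) = (1 - q) ^ j * incrementFactor (1 - p₂) (1 - q) (j + 1) := by
    intro j
    have hcast : ∀ k : ℕ, ((k + 1 : ℕ) : ℝ) - 1 = (k : ℕ) := fun k => by push_cast; ring
    rw [hg _ (by omega), hg _ (by omega), hcast, hcast, Real.rpow_natCast, Real.rpow_natCast,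
      Real.rpow_natCast, Real.rpow_natCast, ← sub_eq_pow_mul_incrementFactor]
  -- The factor at `n₀` may vanish; a half-integer threshold keeps `K = n₀` out of both cases.
  refine ⟨n₀ + 1 / 2, by linarith, fun K hK => ?_⟩
  obtain ⟨j, rfl⟩ := Nat.exists_eq_add_of_le' hK
  constructor
  · intro hle
    have hj : ((j + 1 : ℕ) : ℝ) < n₀ := by push_cast at hle ⊢; linarith
    linarith [hgap j, mul_pos (pow_pos hb j) ((hpos _).2 (mod_cast hj))]
  · intro hge
    have hj : (n₀ : ℝ) < (j + 1 : ℕ) := by push_cast at hge ⊢; linarith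
    linarith [hgap j, mul_neg_of_pos_of_neg (pow_pos hb j) (hneg _ (mod_cast hj))]
end
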